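/- arXiv:1407.2801 — 2 statements merged into one kernel-verified Lean document; each statement's English description precedes it below -/
import Mathlib

section
/- Let 1 ≤ u ≤ v ≤ n and let π be any permutation of [n]. Then ∑_{i=u}^{v} ∑_{j=u}^{v} (π(i)−π(j))^2 ≥ ∑_{i=u}^{v} ∑_{j=u}^{v} (i−j)^2. In other words, the identity permutation is optimal for the 2-SUM problem when the similarity matrix is the cut matrix CUT(u,v). -/
/-- `A` is a Robinson similarity matrix: it is symmetric and its entries decrease
monotonically in rows and columns when moving away from the main diagonal, i.e.
`A i k ≤ min (A i j) (A j k)` for all `i ≤ j ≤ k`. -/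
def IsRobinsonSim {n : ℕ} (A : Matrix (Fin n) (Fin n) ℝ) : Prop :=
  (∀ i j, A i j = A j i) ∧
  ∀ i j k : Fin n, i ≤ j → j ≤ k → A i k ≤ min (A i j) (A j k)

/-- `B` is a Robinson dissimilarity matrix: it is symmetric and
`max (B i j) (B j k) ≤ B i k` for all `i ≤ j ≤ k`. -/
def IsRobinsonDissim {n : ℕ} (B : Matrix (Fin n) (Fin n) ℝ) : Prop :=
  (∀ i j, B i j = B j i) ∧
  ∀ i j k : Fin n, i ≤ j → j ≤ k → max (B i j) (B j k) ≤ B i k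

/-- `A` is a Toeplitz matrix: `A i j = A (i+1) (j+1)` whenever the indices make sense. -/
def IsToeplitz {n : ℕ} (A : Matrix (Fin n) (Fin n) ℝ) : Prop :=
  ∀ (i j : Fin n) (hi : i.val + 1 < n) (hj : j.val + 1 < n),
    A i j = A ⟨i.val + 1, hi⟩ ⟨j.val + 1, hj⟩

/-- The matrix `A_π` with entries `(A_π) i j = A (π i) (π j)`. -/
def permMat {n : ℕ} (A : Matrix (Fin n) (Fin n) ℝ) (π : Equiv.Perm (Fin n)) :
    Matrix (Fin n) (Fin n) ℝ :=
  Matrix.of fun i j => A (π i) (π j)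

/-- The trace inner product `⟨A,B⟩ = ∑_{i,j} A i j * B i j`. -/
def mInner {n : ℕ} (A B : Matrix (Fin n) (Fin n) ℝ) : ℝ :=
  ∑ i, ∑ j, A i j * B i j

/-- The 0/1 Toeplitz Robinson dissimilarity matrix `B^Δ_n`, with `(i,j)` entry `1`
iff `|i - j| ≥ n - Δ` (indices thought of as `1,…,n`, here `0`-based). -/
def BDelta (n Δ : ℕ) : Matrix (Fin n) (Fin n) ℝ :=
  Matrix.of fun i j => if (n : ℤ) - (Δ : ℤ) ≤ |(i.val : ℤ) - (j.val : ℤ)| then 1 else 0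

/-- The set `E^Δ_n` of (unordered, represented here with first coordinate smaller)
upper-triangular support positions of `B^Δ_n`: the pairs `(i,j)` with `i < j` and
`j - i ≥ n - Δ`, i.e. `i + (n - Δ) ≤ j`. -/
def EDelta (n Δ : ℕ) : Finset (Fin n × Fin n) :=
  Finset.univ.filter (fun p => p.1.val + (n - Δ) ≤ p.2.val)

/-!
Sort the values `π i` of the interval `S = [u, v]` increasingly: `S` and `π '' S` are then both
enumerated by strictly increasing maps `Fin m → ℕ`. A strictly increasing map into `ℕ` cannot
shrink distances, so termwise each squared difference for `π '' S` dominates the corresponding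
one for the consecutive values of `S`.
-/

open Finset

def sumSqDiff (T : Finset ℕ) : ℤ :=
  ∑ a ∈ T, ∑ b ∈ T, ((a : ℤ) - b) ^ 2

lemma Fin.sub_le_sub_of_strictMono {m : ℕ} {f : Fin m → ℕ} (hf : StrictMono f) (k l : Fin m) :
    (l : ℕ) - k ≤ f l - f k := by
  rw [← Fin.card_Ico, ← Nat.card_Ico]
  exact card_le_card_of_injOn f (fun i hi => by simp_all [hf.le_iff_le, hf.lt_iff_lt])
    hf.injective.injOn

lemma Fin.abs_sub_le_abs_sub_of_strictMono {m : ℕ} {f : Fin m → ℕ} (hf : StrictMono f)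
    (k l : Fin m) : |(k : ℤ) - l| ≤ |(f k : ℤ) - f l| := by
  wlog hkl : l ≤ k generalizing k l
  · rw [abs_sub_comm, abs_sub_comm (f k : ℤ)]
    exact this l k (le_of_not_ge hkl)
  have hdist := Fin.sub_le_sub_of_strictMono hf l k
  have hf_kl := hf.monotone hkl
  rw [abs_of_nonneg (by omega), abs_of_nonneg (by omega)]
  omega

lemma sumSqDiff_eq_sum_orderEmbOfFin (T : Finset ℕ) :
    sumSqDiff T = ∑ k : Fin #T, ∑ l : Fin #T,
      ((T.orderEmbOfFin rfl k : ℤ) - T.orderEmbOfFin rfl l) ^ 2 := by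
  conv_lhs => rw [sumSqDiff, ← map_orderEmbOfFin_univ T rfl]
  simp only [sum_map, RelEmbedding.coe_toEmbedding]

lemma sumSqDiff_range (m : ℕ) :
    sumSqDiff (range m) = ∑ k : Fin m, ∑ l : Fin m, ((k : ℤ) - l) ^ 2 := by
  simp only [sumSqDiff, ← Fin.sum_univ_eq_sum_range]

lemma sumSqDiff_range_card_le (T : Finset ℕ) : sumSqDiff (range #T) ≤ sumSqDiff T := by
  rw [sumSqDiff_range, sumSqDiff_eq_sum_orderEmbOfFin]
  refine sum_le_sum fun k _ => sum_le_sum fun l _ => ?_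
  exact sq_le_sq.mpr (Fin.abs_sub_le_abs_sub_of_strictMono (T.orderEmbOfFin rfl).strictMono k l)

lemma sumSqDiff_Ico (c d : ℕ) : sumSqDiff (Ico c d) = sumSqDiff (range (d - c)) := by
  simp only [sumSqDiff, sum_Ico_eq_sum_range, Nat.cast_add, add_sub_add_left_eq_sub]

lemma sumSqDiff_Ico_le {T : Finset ℕ} {c d : ℕ} (hT : #T = d - c) :
    sumSqDiff (Ico c d) ≤ sumSqDiff T := by
  rw [sumSqDiff_Ico, ← hT]
  exact sumSqDiff_range_card_le T

theorem identity_optimal_twoSum_cut_general {n u v : ℕ} (hv : v ≤ n)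
    (π : Equiv.Perm (Fin n)) :
    ∑ i ∈ Finset.univ.filter (fun i : Fin n => u ≤ i.val + 1 ∧ i.val + 1 ≤ v),
      ∑ j ∈ Finset.univ.filter (fun j : Fin n => u ≤ j.val + 1 ∧ j.val + 1 ≤ v),
        (((π i).val : ℤ) - ((π j).val : ℤ)) ^ 2
    ≥ ∑ i ∈ Finset.univ.filter (fun i : Fin n => u ≤ i.val + 1 ∧ i.val + 1 ≤ v),
        ∑ j ∈ Finset.univ.filter (fun j : Fin n => u ≤ j.val + 1 ∧ j.val + 1 ≤ v),
          ((i.val : ℤ) - (j.val : ℤ)) ^ 2 := by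
  set S := Finset.univ.filter (fun i : Fin n => u ≤ i.val + 1 ∧ i.val + 1 ≤ v)
  have hS : S.map Fin.valEmbedding = Ico (u - 1) v := by
    ext x
    simp only [S, mem_map, mem_filter, mem_univ, true_and, mem_Ico, Fin.valEmbedding_apply]
    exact ⟨by rintro ⟨i, hi, rfl⟩; omega, fun hx => ⟨⟨x, by omega⟩, by simp; omega, rfl⟩⟩
  have hcard : #(S.map (π.toEmbedding.trans Fin.valEmbedding)) = v - (u - 1) := by
    rw [card_map, ← Nat.card_Ico, ← hS, card_map]
  have key := sumSqDiff_Ico_le hcard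
  rw [← hS] at key
  simpa only [sumSqDiff, sum_map, Function.Embedding.trans_apply, Equiv.coe_toEmbedding,
    Fin.valEmbedding_apply] using key

/-- for `1 ≤ u ≤ v ≤ n` and any permutation `π` of `[n]` (here `1`-based
indices `i` correspond to `i.val + 1`),
`∑_{i,j = u}^{v} (π i - π j)² ≥ ∑_{i,j = u}^{v} (i - j)²`. -/
theorem identity_optimal_twoSum_cut {n u v : ℕ} (hu : 1 ≤ u) (huv : u ≤ v) (hv : v ≤ n)
    (π : Equiv.Perm (Fin n)) :
    ∑ i ∈ Finset.univ.filter (fun i : Fin n => u ≤ i.val + 1 ∧ i.val + 1 ≤ v),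
      ∑ j ∈ Finset.univ.filter (fun j : Fin n => u ≤ j.val + 1 ∧ j.val + 1 ≤ v),
        (((π i).val : ℤ) - ((π j).val : ℤ)) ^ 2
    ≥ ∑ i ∈ Finset.univ.filter (fun i : Fin n => u ≤ i.val + 1 ∧ i.val + 1 ≤ v),
        ∑ j ∈ Finset.univ.filter (fun j : Fin n => u ≤ j.val + 1 ∧ j.val + 1 ≤ v),
          ((i.val : ℤ) - (j.val : ℤ)) ^ 2 :=
  identity_optimal_twoSum_cut_general hv π
end

section
/- Let n ≥ 2, let A be an n×n Robinson similarity matrix, let Δ be an integer with 2 ≤ Δ ≤ n−1, let π be a permutation of [n], and let k = π^{-1}(n). Assume the induction hypothesis: for every (n−1)×(n−1) Robinson similarity matrix A'' and every permutation σ of [n−1], ∑_{{i,j} ∈ E^{Δ−1}_{n−1}} A''_{σ(i)σ(j)} ≥ ∑_{{i,j} ∈ E^{Δ−1}_{n−1}} A''_{ij}. Suppose there exist F ⊆ E^Δ_n and a permutation τ of [n] satisfying: (C1) |F| = Δ; (C2) the values min{π(i), π(j)} over pairs {i,j} ∈ F are pairwise distinct; and (C3) τ(n) = k and E^Δ_n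 \ F = {{τ(i), τ(j)} : {i,j} ∈ E^{Δ−1}_{n−1}}. Then ∑_{{i,j} ∈ E^Δ_n} A_{π(i)π(j)} ≥ ∑_{{i,j} ∈ E^Δ_n} A_{ij}. -/
/-!
Split `E^Δ_n` into `E^{Δ-1}_{n-1}` and the last-column pairs `{a, n}`, `a ≤ Δ`. By (C3) the
permuted sum over `E^Δ_n \ F` is the sum over `E^{Δ-1}_{n-1}` permuted by `σ = π ∘ τ`, which
fixes `n` because `τ n = π⁻¹ n`; so the induction hypothesis bounds it by the unpermuted sum
over `E^{Δ-1}_{n-1}`. On `F` the Robinson property gives `A (π i) (π j) ≥ A m n` with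
`m = min (π i) (π j)`; by (C1), (C2) these `m` are `Δ` distinct indices of `[n]`, and the last
column `a ↦ A a n` is nondecreasing, so this part is at least `∑_{a ≤ Δ} A a n`.
-/

/-- The set `E^Δ_n = {{i, n - Δ + j} : 1 ≤ i ≤ j ≤ Δ}` of unordered pairs of elements
of `[n] = {1,…,n}`. Since `i ≤ Δ < n - Δ + j` for every such pair, each unordered pair
is represented canonically by the ordered pair whose first coordinate is the smaller
element. -/
def EDeltaPairs (n Δ : ℕ) : Finset (ℕ × ℕ) :=
  ((Finset.Icc 1 Δ ×ˢ Finset.Icc 1 Δ).filter (fun p => p.1 ≤ p.2)).image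
    (fun p => (p.1, n - Δ + p.2))

/-- `A` (an `n × n` matrix encoded as a function on `ℕ`, entries relevant on
`{1,…,n}²`) is a Robinson similarity matrix: symmetric and
`A i k ≤ min (A i j) (A j k)` for all `1 ≤ i ≤ j ≤ k ≤ n`. -/
def RobinsonSimOn (n : ℕ) (A : ℕ → ℕ → ℝ) : Prop :=
  (∀ i j, 1 ≤ i → i ≤ n → 1 ≤ j → j ≤ n → A i j = A j i) ∧
  (∀ i j k, 1 ≤ i → i ≤ j → j ≤ k → k ≤ n → A i k ≤ min (A i j) (A j k))

open Finset

lemma Equiv.Perm.apply_mem_of_forall_notMem_eq_self {α : Type*} {σ : Equiv.Perm α}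
    {s : Finset α} (hσ : ∀ x, x ∉ s → σ x = x) {x : α} (hx : x ∈ s) : σ x ∈ s := by
  by_contra h
  rw [σ.injective (hσ _ h)] at h
  exact h hx

lemma apply_min_max_of_apply_comm {α β : Type*} [LinearOrder α] (B : α → α → β) {x y : α}
    (h : B y x = B x y) : B (min x y) (max x y) = B x y := by
  rcases le_total x y with hxy | hxy
  · rw [min_eq_left hxy, max_eq_right hxy]
  · rw [min_eq_right hxy, max_eq_left hxy, h]

lemma sum_Icc_card_le_sum_of_monotoneOn {M : Type*} [AddCommMonoid M] [PartialOrder M]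
    [IsOrderedAddMonoid M] {g : ℕ → M} {n : ℕ} (hg : MonotoneOn g (Set.Icc 1 n))
    {S : Finset ℕ} (hS : S ⊆ Icc 1 n) : ∑ a ∈ Icc 1 #S, g a ≤ ∑ s ∈ S, g s := by
  induction S using Finset.induction_on_max with
  | empty => simp
  | insert a S hlt ih =>
    have haS : a ∉ S := fun h => (hlt a h).false
    have hS' : S ⊆ Icc 1 n := (subset_insert a S).trans hS
    have ha : a ∈ Icc 1 n := hS (mem_insert_self a S)
    have hcard : #S + 1 ≤ a := by
      have : insert a S ⊆ Icc 1 a := fun x hx =>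
        mem_Icc.2 ⟨(mem_Icc.1 (hS hx)).1, (mem_insert.1 hx).elim le_of_eq fun h => (hlt x h).le⟩
      simpa [card_insert_of_notMem haS] using card_le_card this
    rw [card_insert_of_notMem haS, sum_Icc_succ_top (by omega), sum_insert haS, add_comm (g a)]
    exact add_le_add (ih hS') (hg (by simp [mem_Icc] at ha ⊢; omega) (by simpa using ha) hcard)

section EDeltaPairs

variable {n Δ : ℕ}

lemma mem_EDeltaPairs {q : ℕ × ℕ} :
    q ∈ EDeltaPairs n Δ ↔ ∃ a b, 1 ≤ a ∧ a ≤ b ∧ b ≤ Δ ∧ q = (a, n - Δ + b) := by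
  simp only [EDeltaPairs, mem_image, mem_filter, mem_product, mem_Icc, Prod.exists]
  constructor
  · rintro ⟨a, b, ⟨⟨⟨h1, -⟩, -, h4⟩, h5⟩, rfl⟩
    exact ⟨a, b, h1, h5, h4, rfl⟩
  · rintro ⟨a, b, h1, h2, h3, rfl⟩
    exact ⟨a, b, ⟨⟨⟨h1, h2.trans h3⟩, h1.trans h2, h3⟩, h2⟩, rfl⟩

lemma EDeltaPairs_bounds (hΔ : Δ ≤ n) {q : ℕ × ℕ} (hq : q ∈ EDeltaPairs n Δ) :
    q.1 ∈ Icc 1 n ∧ q.2 ∈ Icc 1 n := by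
  obtain ⟨a, b, h1, h2, h3, rfl⟩ := mem_EDeltaPairs.1 hq
  simp only [mem_Icc]
  omega

lemma EDeltaPairs_eq_union (hΔ : Δ ≤ n) :
    EDeltaPairs n Δ = EDeltaPairs (n - 1) (Δ - 1) ∪ (Icc 1 Δ).image (·, n) := by
  ext ⟨x, y⟩
  simp only [mem_union, mem_EDeltaPairs, mem_image, mem_Icc, Prod.mk.injEq]
  constructor
  · rintro ⟨a, b, h1, h2, h3, hx, hy⟩
    by_cases hb : b = Δ
    · exact .inr ⟨a, by omega⟩
    · exact .inl ⟨a, b, by omega⟩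
  · rintro (⟨a, b, h1, h2, h3, hx, hy⟩ | ⟨a, ⟨h1, h2⟩, hx, hy⟩)
    · exact ⟨a, b, by omega⟩
    · exact ⟨a, Δ, by omega⟩

lemma disjoint_EDeltaPairs_pred (hΔ : Δ ≤ n) :
    Disjoint (EDeltaPairs (n - 1) (Δ - 1)) ((Icc 1 Δ).image (·, n)) := by
  refine disjoint_left.2 fun q hq hqT => ?_
  obtain ⟨a, b, h1, h2, h3, rfl⟩ := mem_EDeltaPairs.1 hq
  obtain ⟨c, -, hc⟩ := mem_image.1 hqT
  simp only [Prod.mk.injEq] at hc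
  omega

lemma sum_EDeltaPairs {M : Type*} [AddCommMonoid M] (hΔ : Δ ≤ n) (f : ℕ → ℕ → M) :
    ∑ p ∈ EDeltaPairs n Δ, f p.1 p.2 =
      ∑ p ∈ EDeltaPairs (n - 1) (Δ - 1), f p.1 p.2 + ∑ a ∈ Icc 1 Δ, f a n := by
  rw [EDeltaPairs_eq_union hΔ, sum_union (disjoint_EDeltaPairs_pred hΔ),
    sum_image fun _ _ _ _ h => (Prod.mk.inj h).1]

lemma card_EDeltaPairs (hΔ : Δ ≤ n) :
    #(EDeltaPairs n Δ) = #(EDeltaPairs (n - 1) (Δ - 1)) + Δ := by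
  rw [card_eq_sum_ones, card_eq_sum_ones, sum_EDeltaPairs hΔ fun _ _ => 1]
  simp

end EDeltaPairs

namespace RobinsonSimOn

variable {n : ℕ} {A : ℕ → ℕ → ℝ}

lemma mono {m : ℕ} (hA : RobinsonSimOn n A) (hmn : m ≤ n) : RobinsonSimOn m A :=
  ⟨fun i j h1 h2 h3 h4 => hA.1 i j h1 (h2.trans hmn) h3 (h4.trans hmn),
    fun i j k h1 h2 h3 h4 => hA.2 i j k h1 h2 h3 (h4.trans hmn)⟩

lemma apply_comm (hA : RobinsonSimOn n A) {i j : ℕ} (hi : i ∈ Icc 1 n) (hj : j ∈ Icc 1 n) :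
    A i j = A j i := by
  rw [mem_Icc] at hi hj
  exact hA.1 i j hi.1 hi.2 hj.1 hj.2

lemma apply_last_le_apply (hA : RobinsonSimOn n A) {i j : ℕ} (hi : 1 ≤ i) (hij : i ≤ j)
    (hj : j ≤ n) : A i n ≤ A i j :=
  (hA.2 i j n hi hij hj le_rfl).trans (min_le_left _ _)

lemma monotoneOn_apply_last (hA : RobinsonSimOn n A) : MonotoneOn (A · n) (Set.Icc 1 n) :=
  fun i hi j hj hij => (hA.2 i j n hi.1 hij hj.2 le_rfl).trans (min_le_right _ _)

lemma apply_min_last_le (hA : RobinsonSimOn n A) {i j : ℕ} (hi : i ∈ Icc 1 n)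
    (hj : j ∈ Icc 1 n) : A (min i j) n ≤ A i j := by
  rcases le_total i j with hij | hji
  · rw [min_eq_left hij]
    exact hA.apply_last_le_apply (mem_Icc.1 hi).1 hij (mem_Icc.1 hj).2
  · rw [min_eq_right hji, hA.apply_comm hi hj]
    exact hA.apply_last_le_apply (mem_Icc.1 hj).1 hji (mem_Icc.1 hi).2

lemma sum_Icc_apply_last_le_sum {ι : Type*} (hA : RobinsonSimOn n A) {F : Finset ι}
    {u v : ι → ℕ} (hu : ∀ p ∈ F, u p ∈ Icc 1 n) (hv : ∀ p ∈ F, v p ∈ Icc 1 n)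
    (hF : Set.InjOn (fun p => min (u p) (v p)) F) :
    ∑ a ∈ Icc 1 #F, A a n ≤ ∑ p ∈ F, A (u p) (v p) := by
  have hmin : F.image (fun p => min (u p) (v p)) ⊆ Icc 1 n := by
    simp only [subset_iff, mem_image, forall_exists_index, and_imp, forall_apply_eq_imp_iff₂]
    intro p hp
    rcases le_total (u p) (v p) with h | h
    · simpa [min_eq_left h] using hu p hp
    · simpa [min_eq_right h] using hv p hp
  calc ∑ a ∈ Icc 1 #F, A a n
      = ∑ a ∈ Icc 1 #(F.image fun p => min (u p) (v p)), A a n := by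
        rw [card_image_of_injOn hF]
    _ ≤ ∑ s ∈ F.image (fun p => min (u p) (v p)), A s n :=
        sum_Icc_card_le_sum_of_monotoneOn hA.monotoneOn_apply_last hmin
    _ = ∑ p ∈ F, A (min (u p) (v p)) n := sum_image hF
    _ ≤ ∑ p ∈ F, A (u p) (v p) :=
        sum_le_sum fun p hp => hA.apply_min_last_le (hu p hp) (hv p hp)

end RobinsonSimOn

theorem claim1_sum_ge_general {n Δ : ℕ}
    (A : ℕ → ℕ → ℝ) (hA : RobinsonSimOn n A)
    (hΔ2 : Δ ≤ n - 1)
    (π : Equiv.Perm ℕ) (hπ : ∀ i, i ∉ Finset.Icc 1 n → π i = i)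
    (IH : ∀ A'' : ℕ → ℕ → ℝ, RobinsonSimOn (n - 1) A'' →
      ∀ σ : Equiv.Perm ℕ, (∀ i, i ∉ Finset.Icc 1 (n - 1) → σ i = i) →
        ∑ p ∈ EDeltaPairs (n - 1) (Δ - 1), A'' (σ p.1) (σ p.2)
          ≥ ∑ p ∈ EDeltaPairs (n - 1) (Δ - 1), A'' p.1 p.2)
    (F : Finset (ℕ × ℕ)) (hF : F ⊆ EDeltaPairs n Δ)
    (τ : Equiv.Perm ℕ) (hτ : ∀ i, i ∉ Finset.Icc 1 n → τ i = i)
    (hC1 : F.card = Δ)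
    (hC2 : Set.InjOn (fun p : ℕ × ℕ => min (π p.1) (π p.2)) ↑F)
    (hC3a : τ n = π.symm n)
    (hC3b : EDeltaPairs n Δ \ F = (EDeltaPairs (n - 1) (Δ - 1)).image
      (fun p => (min (τ p.1) (τ p.2), max (τ p.1) (τ p.2)))) :
    ∑ p ∈ EDeltaPairs n Δ, A (π p.1) (π p.2) ≥ ∑ p ∈ EDeltaPairs n Δ, A p.1 p.2 := by
  have hΔn : Δ ≤ n := hΔ2.trans (Nat.sub_le n 1)
  set E' := EDeltaPairs (n - 1) (Δ - 1)
  have hπI {i : ℕ} := Equiv.Perm.apply_mem_of_forall_notMem_eq_self hπ (x := i)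
  have hτI {i : ℕ} := Equiv.Perm.apply_mem_of_forall_notMem_eq_self hτ (x := i)
  have hσ : ∀ i, i ∉ Icc 1 (n - 1) → τ.trans π i = i := by
    intro i hi
    by_cases hin : i = n
    · simp [hin, hC3a]
    · have hi' : i ∉ Icc 1 n := by simp only [mem_Icc] at hi ⊢; omega
      simp [hτ i hi', hπ i hi']
  have hinj : Set.InjOn (fun p : ℕ × ℕ => (min (τ p.1) (τ p.2), max (τ p.1) (τ p.2))) E' := by
    apply injOn_of_card_image_eq
    rw [← hC3b, card_sdiff_of_subset hF, card_EDeltaPairs hΔn, hC1, Nat.add_sub_cancel]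
  have hterm : ∀ p ∈ E', A (π (min (τ p.1) (τ p.2))) (π (max (τ p.1) (τ p.2))) =
      A (τ.trans π p.1) (τ.trans π p.2) := fun p hp =>
    have hp' := EDeltaPairs_bounds (by omega) hp
    apply_min_max_of_apply_comm (fun i j => A (π i) (π j))
      (hA.apply_comm (hπI (hτI (Icc_subset_Icc_right (Nat.sub_le n 1) hp'.2)))
        (hπI (hτI (Icc_subset_Icc_right (Nat.sub_le n 1) hp'.1))))
  calc ∑ p ∈ EDeltaPairs n Δ, A p.1 p.2
      = ∑ p ∈ E', A p.1 p.2 + ∑ a ∈ Icc 1 #F, A a n := by rw [sum_EDeltaPairs hΔn, hC1]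
    _ ≤ ∑ p ∈ E', A (τ.trans π p.1) (τ.trans π p.2) + ∑ p ∈ F, A (π p.1) (π p.2) :=
        add_le_add (IH A (hA.mono (Nat.sub_le n 1)) _ hσ)
          (hA.sum_Icc_apply_last_le_sum (fun p hp => hπI (EDeltaPairs_bounds hΔn (hF hp)).1)
            (fun p hp => hπI (EDeltaPairs_bounds hΔn (hF hp)).2) hC2)
    _ = ∑ p ∈ EDeltaPairs n Δ \ F, A (π p.1) (π p.2) + ∑ p ∈ F, A (π p.1) (π p.2) := by
        rw [hC3b, sum_image hinj, sum_congr rfl hterm]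
    _ = ∑ p ∈ EDeltaPairs n Δ, A (π p.1) (π p.2) := sum_sdiff hF

/-- Claim 1: let `2 ≤ n`, let `A` be an `n × n` Robinson similarity,
`2 ≤ Δ ≤ n - 1`, let `π` be a permutation of `[n]` and `k = π⁻¹ n`. Assume the
induction hypothesis for `(n-1) × (n-1)` Robinson similarities on `E^{Δ-1}_{n-1}`.
If there exist `F ⊆ E^Δ_n` and a permutation `τ` of `[n]` satisfying (C1) `|F| = Δ`,
(C2) the values `min (π i) (π j)`, `{i,j} ∈ F`, are pairwise distinct, and (C3)
`τ n = k` and `E^Δ_n \ F = τ(E^{Δ-1}_{n-1})`, then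
`∑_{{i,j} ∈ E^Δ_n} A (π i) (π j) ≥ ∑_{{i,j} ∈ E^Δ_n} A i j`. -/
theorem claim1_sum_ge {n Δ : ℕ} (hn : 2 ≤ n)
    (A : ℕ → ℕ → ℝ) (hA : RobinsonSimOn n A)
    (hΔ1 : 2 ≤ Δ) (hΔ2 : Δ ≤ n - 1)
    (π : Equiv.Perm ℕ) (hπ : ∀ i, i ∉ Finset.Icc 1 n → π i = i)
    (IH : ∀ A'' : ℕ → ℕ → ℝ, RobinsonSimOn (n - 1) A'' →
      ∀ σ : Equiv.Perm ℕ, (∀ i, i ∉ Finset.Icc 1 (n - 1) → σ i = i) →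
        ∑ p ∈ EDeltaPairs (n - 1) (Δ - 1), A'' (σ p.1) (σ p.2)
          ≥ ∑ p ∈ EDeltaPairs (n - 1) (Δ - 1), A'' p.1 p.2)
    (F : Finset (ℕ × ℕ)) (hF : F ⊆ EDeltaPairs n Δ)
    (τ : Equiv.Perm ℕ) (hτ : ∀ i, i ∉ Finset.Icc 1 n → τ i = i)
    (hC1 : F.card = Δ)
    (hC2 : Set.InjOn (fun p : ℕ × ℕ => min (π p.1) (π p.2)) ↑F)
    (hC3a : τ n = π.symm n)
    (hC3b : EDeltaPairs n Δ \ F = (EDeltaPairs (n - 1) (Δ - 1)).image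
      (fun p => (min (τ p.1) (τ p.2), max (τ p.1) (τ p.2)))) :
    ∑ p ∈ EDeltaPairs n Δ, A (π p.1) (π p.2) ≥ ∑ p ∈ EDeltaPairs n Δ, A p.1 p.2 :=
  claim1_sum_ge_general A hA hΔ2 π hπ IH F hF τ hτ hC1 hC2 hC3a hC3b
end
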